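/- Fix an integer d ≥ 4 and define v_d(m,t) by the recursion v_d(0,t) = 0, v_d(1,t) = exp(−dt/(d−1)), and for m ≥ 2, v_d(m,t) = e^{−mt} + ∫_0^t (m e^{−mu}/(d−1))·[m·v_d(m−2, t−u) + m(d−2)·v_d(m−1, t−u)] du. For α > 0 let R_d(m)(α) = ∫_0^∞ e^{−αt}(v_d(m,t) − v_d(m−1,t)) dt. Then for every integer m ≥ 1 the function α ↦ R_d(m)(α) is completely monotone on (0,∞): it is infinitely differentiable and for every integer k ≥ 0 and every α > 0, (−1)^k · (d/dα)^k R_d(m)(α) ≥ 0. -/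

import Mathlib

open MeasureTheory intervalIntegral in
/-- Tail probability `v_d(m,t)` of the coupling time of the optimal co-adapted
coupling, defined recursively in `m`. -/
noncomputable def v (d : ℕ) : ℕ → ℝ → ℝ
  | 0, _ => 0
  | 1, t => Real.exp (-((d : ℝ) * t) / ((d : ℝ) - 1))
  | (m + 2), t =>
      Real.exp (-((m : ℝ) + 2) * t) +
        ∫ u in (0 : ℝ)..t,
          (((m : ℝ) + 2) * Real.exp (-((m : ℝ) + 2) * u) / ((d : ℝ) - 1)) *
            (((m : ℝ) + 2) * v d m (t - u) +
              ((m : ℝ) + 2) * ((d : ℝ) - 2) * v d (m + 1) (t - u))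

/-- `R_d(m)(α) = ∫_0^∞ e^{−αt} (v_d(m,t) − v_d(m−1,t)) dt`. -/
noncomputable def Rfun (d m : ℕ) : ℝ → ℝ := fun α =>
  ∫ t in Set.Ioi (0 : ℝ), Real.exp (-α * t) * (v d m t - v d (m - 1) t)

open MeasureTheory Set Filter

noncomputable def phi (d m : ℕ) (t : ℝ) : ℝ :=
  ((m : ℝ) + 2) ^ 2 / ((d : ℝ) - 1) * v d m t +
    ((m : ℝ) + 2) ^ 2 * ((d : ℝ) - 2) / ((d : ℝ) - 1) * v d (m + 1) t

lemma v_zero (d : ℕ) (t : ℝ) : v d 0 t = 0 := rfl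

lemma v_shift (d m : ℕ) (t : ℝ) :
    v d (m + 2) t = Real.exp (-((m : ℝ) + 2) * t) *
      (1 + ∫ s in (0 : ℝ)..t, Real.exp (((m : ℝ) + 2) * s) * phi d m s) := by
  show (Real.exp (-((m : ℝ) + 2) * t) +
        ∫ u in (0 : ℝ)..t,
          (((m : ℝ) + 2) * Real.exp (-((m : ℝ) + 2) * u) / ((d : ℝ) - 1)) *
            (((m : ℝ) + 2) * v d m (t - u) +
              ((m : ℝ) + 2) * ((d : ℝ) - 2) * v d (m + 1) (t - u))) = _
  have h1 : ∀ u : ℝ,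
      (((m : ℝ) + 2) * Real.exp (-((m : ℝ) + 2) * u) / ((d : ℝ) - 1)) *
            (((m : ℝ) + 2) * v d m (t - u) +
              ((m : ℝ) + 2) * ((d : ℝ) - 2) * v d (m + 1) (t - u))
      = Real.exp (-((m : ℝ) + 2) * t) *
          ((fun s => Real.exp (((m : ℝ) + 2) * s) * phi d m s) (t - u)) := by
    intro u
    have he : Real.exp (-((m : ℝ) + 2) * u)
        = Real.exp (-((m : ℝ) + 2) * t) * Real.exp (((m : ℝ) + 2) * (t - u)) := by
      rw [← Real.exp_add]; ring_nf
    rw [he]; simp only [phi]; ring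
  rw [intervalIntegral.integral_congr (g := fun u => Real.exp (-((m : ℝ) + 2) * t) *
          ((fun s => Real.exp (((m : ℝ) + 2) * s) * phi d m s) (t - u)))
      (fun u _ => h1 u)]
  rw [intervalIntegral.integral_const_mul]
  rw [intervalIntegral.integral_comp_sub_left (fun s => Real.exp (((m : ℝ) + 2) * s) * phi d m s) t]
  simp only [sub_self, sub_zero]
  ring

lemma v_cont (d : ℕ) : ∀ m : ℕ, Continuous (v d m) := by
  intro m
  induction m using Nat.strong_induction_on with
  | _ m ih =>
    match m with
    | 0 => exact continuous_const
    | 1 =>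
      show Continuous fun t => Real.exp (-((d : ℝ) * t) / ((d : ℝ) - 1))
      fun_prop
    | (m + 2) =>
      have hphi : Continuous (phi d m) := by
        have h1 := ih m (by omega)
        have h2 := ih (m + 1) (by omega)
        unfold phi; fun_prop
      have : Continuous fun t : ℝ =>
          ∫ s in (0 : ℝ)..t, Real.exp (((m : ℝ) + 2) * s) * phi d m s := by
        apply intervalIntegral.continuous_primitive
        intro a b
        exact (Continuous.mul (by fun_prop) hphi).intervalIntegrable a b
      have heq : v d (m + 2) = fun t => Real.exp (-((m : ℝ) + 2) * t) *
          (1 + ∫ s in (0 : ℝ)..t, Real.exp (((m : ℝ) + 2) * s) * phi d m s) := by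
        funext t; exact v_shift d m t
      rw [heq]
      exact (by fun_prop : Continuous fun t : ℝ => Real.exp (-((m : ℝ) + 2) * t)).mul
        (continuous_const.add this)

lemma v_at_zero (d m : ℕ) : v d (m + 2) 0 = 1 := by
  rw [v_shift]; simp

lemma v1_at_zero (d : ℕ) : v d 1 0 = 1 := by
  show Real.exp (-((d : ℝ) * 0) / ((d : ℝ) - 1)) = 1
  simp

lemma v1_hasDeriv (d : ℕ) (t : ℝ) :
    HasDerivAt (v d 1) (-((d : ℝ) / ((d : ℝ) - 1)) * v d 1 t) t := by
  have heq : v d 1 = fun t : ℝ => Real.exp (-((d : ℝ) / ((d : ℝ) - 1)) * t) := by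
    funext t
    show Real.exp (-((d : ℝ) * t) / ((d : ℝ) - 1)) = _
    ring_nf
  rw [heq]
  have h := ((hasDerivAt_id t).const_mul (-((d : ℝ) / ((d : ℝ) - 1)))).exp
  simpa [mul_comm] using h

lemma v_hasDeriv (d m : ℕ) (t : ℝ) :
    HasDerivAt (v d (m + 2)) (-(((m : ℝ) + 2) * v d (m + 2) t) + phi d m t) t := by
  have hphi : Continuous (phi d m) := by
    have h1 := v_cont d m
    have h2 := v_cont d (m + 1)
    unfold phi; fun_prop
  have hg : Continuous fun s : ℝ => Real.exp (((m : ℝ) + 2) * s) * phi d m s := by fun_prop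
  have hF : HasDerivAt (fun u : ℝ => ∫ s in (0 : ℝ)..u, Real.exp (((m : ℝ) + 2) * s) * phi d m s)
      (Real.exp (((m : ℝ) + 2) * t) * phi d m t) t := by
    exact intervalIntegral.integral_hasDerivAt_right (hg.intervalIntegrable 0 t)
      (hg.stronglyMeasurableAtFilter _ _) hg.continuousAt
  have hE : HasDerivAt (fun u : ℝ => Real.exp (-((m : ℝ) + 2) * u))
      (-((m : ℝ) + 2) * Real.exp (-((m : ℝ) + 2) * t)) t := by
    have h := ((hasDerivAt_id t).const_mul (-((m : ℝ) + 2))).exp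
    simpa [mul_comm] using h
  have hmul := hE.mul ((hasDerivAt_const t (1:ℝ)).add hF)
  have heq : v d (m + 2) = fun u => Real.exp (-((m : ℝ) + 2) * u) *
      (1 + ∫ s in (0 : ℝ)..u, Real.exp (((m : ℝ) + 2) * s) * phi d m s) := by
    funext u; exact v_shift d m u
  rw [heq]
  convert hmul using 1
  · rfl
  · rfl
  · rfl
  have hexp : Real.exp (-((m : ℝ) + 2) * t) * Real.exp (((m : ℝ) + 2) * t) = 1 := by
    rw [← Real.exp_add]; ring_nf; exact Real.exp_zero
  have hv := v_shift d m t
  simp only [Pi.add_apply]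
  linear_combination (-(phi d m t)) * hexp

lemma mono_of_ode {W g : ℝ → ℝ} (hW : ∀ t, HasDerivAt W (g t) t)
    (hg : ∀ t, 0 ≤ t → 0 ≤ g t) : ∀ t, 0 ≤ t → W 0 ≤ W t := by
  have hmono : MonotoneOn W (Set.Ici 0) := by
    apply monotoneOn_of_deriv_nonneg (convex_Ici 0)
    · exact fun x _ => ((hW x).continuousAt).continuousWithinAt
    · exact fun x _ => ((hW x).differentiableAt).differentiableWithinAt
    · intro x hx
      rw [(hW x).deriv]
      rw [interior_Ici] at hx
      exact hg x (le_of_lt hx)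
  exact fun t ht => hmono Set.self_mem_Ici ht ht

lemma nonneg_of_ode {w g : ℝ → ℝ} {c : ℝ}
    (hw : ∀ t, HasDerivAt w (-(c * w t) + g t) t)
    (hg : ∀ t, 0 ≤ t → 0 ≤ g t) (h0 : 0 ≤ w 0) : ∀ t, 0 ≤ t → 0 ≤ w t := by
  have hW : ∀ t, HasDerivAt (fun t => Real.exp (c * t) * w t)
      (Real.exp (c * t) * g t) t := by
    intro t
    have hE : HasDerivAt (fun u : ℝ => Real.exp (c * u)) (c * Real.exp (c * t)) t := by
      simpa [mul_comm] using ((hasDerivAt_id t).const_mul c).exp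
    have := hE.mul (hw t)
    convert this using 1
    · rfl
    · rfl
    · rfl
    ring
  have := mono_of_ode hW (fun t ht => mul_nonneg (Real.exp_pos _).le (hg t ht))
  intro t ht
  have h1 : Real.exp (c * 0) * w 0 ≤ Real.exp (c * t) * w t := this t ht
  have h2 : (0:ℝ) ≤ Real.exp (c * t) * w t := by
    simp only [mul_zero, Real.exp_zero, one_mul] at h1
    linarith
  exact nonneg_of_mul_nonneg_right h2 (Real.exp_pos _)

lemma v_nonneg (d : ℕ) (hd : 4 ≤ d) : ∀ m : ℕ, ∀ t : ℝ, 0 ≤ t → 0 ≤ v d m t := by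
  have hD : (3:ℝ) ≤ (d:ℝ) - 1 := by
    have : (4:ℝ) ≤ (d:ℝ) := by exact_mod_cast hd
    linarith
  intro m
  induction m using Nat.strong_induction_on with
  | _ m ih =>
    match m with
    | 0 => intro t _; rw [v_zero]
    | 1 => intro t _; exact Real.exp_nonneg _
    | (m + 2) =>
      apply nonneg_of_ode (c := (m : ℝ) + 2) (g := phi d m) (v_hasDeriv d m)
      · intro t ht
        unfold phi
        have h1 := ih m (by omega) t ht
        have h2 := ih (m + 1) (by omega) t ht
        have hm2 : (0:ℝ) ≤ (m:ℝ) + 2 := by positivity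
        have c1 : (0:ℝ) ≤ ((m : ℝ) + 2) ^ 2 / ((d : ℝ) - 1) := by
          apply div_nonneg (by positivity); linarith
        have c2 : (0:ℝ) ≤ ((m : ℝ) + 2) ^ 2 * ((d : ℝ) - 2) / ((d : ℝ) - 1) := by
          apply div_nonneg (by nlinarith); linarith
        have := mul_nonneg c1 h1
        have := mul_nonneg c2 h2
        linarith
      · rw [v_at_zero]; norm_num

lemma v_bounded (d : ℕ) (hd : 4 ≤ d) :
    ∀ m : ℕ, ∃ C : ℝ, 0 ≤ C ∧ ∀ t : ℝ, 0 ≤ t → v d m t ≤ C := by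
  have hD : (3:ℝ) ≤ (d:ℝ) - 1 := by
    have : (4:ℝ) ≤ (d:ℝ) := by exact_mod_cast hd
    linarith
  intro m
  induction m using Nat.strong_induction_on with
  | _ m ih =>
    match m with
    | 0 => exact ⟨0, le_refl _, fun t _ => by rw [v_zero]⟩
    | 1 =>
      refine ⟨1, zero_le_one, fun t ht => ?_⟩
      show Real.exp (-((d : ℝ) * t) / ((d : ℝ) - 1)) ≤ 1
      rw [Real.exp_le_one_iff]
      apply div_nonpos_of_nonpos_of_nonneg
      · have : (0:ℝ) ≤ (d:ℝ) := by positivity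
        nlinarith
      · linarith
    | (m + 2) =>
      obtain ⟨C0, hC0, hB0⟩ := ih m (by omega)
      obtain ⟨C1, hC1, hB1⟩ := ih (m + 1) (by omega)
      set c : ℝ := (m : ℝ) + 2 with hc
      have hcpos : 0 < c := by positivity
      set K : ℝ := ((m : ℝ) + 2) ^ 2 / ((d : ℝ) - 1) * C0 +
        ((m : ℝ) + 2) ^ 2 * ((d : ℝ) - 2) / ((d : ℝ) - 1) * C1 with hK
      have c1 : (0:ℝ) ≤ ((m : ℝ) + 2) ^ 2 / ((d : ℝ) - 1) := by
        apply div_nonneg (by positivity); linarith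
      have c2 : (0:ℝ) ≤ ((m : ℝ) + 2) ^ 2 * ((d : ℝ) - 2) / ((d : ℝ) - 1) := by
        apply div_nonneg (by nlinarith); linarith
      have hKnn : 0 ≤ K := by
        have := mul_nonneg c1 hC0
        have := mul_nonneg c2 hC1
        rw [hK]; linarith
      have hphiK : ∀ t, 0 ≤ t → phi d m t ≤ K := by
        intro t ht
        unfold phi
        have h1 := mul_le_mul_of_nonneg_left (hB0 t ht) c1
        have h2 := mul_le_mul_of_nonneg_left (hB1 t ht) c2
        rw [hK]; linarith
      have hphi : Continuous (phi d m) := by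
        have h1 := v_cont d m
        have h2 := v_cont d (m + 1)
        unfold phi; fun_prop
      have hg : Continuous fun s : ℝ => Real.exp (c * s) * phi d m s := by fun_prop
      have hF : ∀ t, HasDerivAt (fun u : ℝ => ∫ s in (0:ℝ)..u, Real.exp (c * s) * phi d m s)
          (Real.exp (c * t) * phi d m t) t := fun t =>
        intervalIntegral.integral_hasDerivAt_right (hg.intervalIntegrable 0 t)
          (hg.stronglyMeasurableAtFilter _ _) hg.continuousAt
      have hG : ∀ t, HasDerivAt (fun u : ℝ => K / c * Real.exp (c * u) -
          ∫ s in (0:ℝ)..u, Real.exp (c * s) * phi d m s)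
          (K * Real.exp (c * t) - Real.exp (c * t) * phi d m t) t := by
        intro t
        have hE : HasDerivAt (fun u : ℝ => Real.exp (c * u)) (c * Real.exp (c * t)) t := by
          simpa [mul_comm] using ((hasDerivAt_id t).const_mul c).exp
        have := (hE.const_mul (K / c)).sub (hF t)
        convert this using 1
        · rfl
        · rfl
        · rfl
        field_simp
      have hmono := mono_of_ode hG (fun t ht => by
        have := mul_le_mul_of_nonneg_left (hphiK t ht) (Real.exp_pos (c * t)).le
        nlinarith)
      refine ⟨1 + K / c, by positivity, fun t ht => ?_⟩
      have h0 : (K / c * Real.exp (c * 0) - ∫ s in (0:ℝ)..(0:ℝ), Real.exp (c * s) * phi d m s)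
          = K / c := by simp
      have hFt : (∫ s in (0:ℝ)..t, Real.exp (c * s) * phi d m s) ≤ K / c * Real.exp (c * t) - K / c := by
        have := hmono t ht
        rw [h0] at this
        linarith
      have hv := v_shift d m t
      rw [hv]
      have he1 : Real.exp (-((m:ℝ) + 2) * t) ≤ 1 := by
        rw [Real.exp_le_one_iff]; nlinarith
      have he0 : (0:ℝ) < Real.exp (-((m:ℝ) + 2) * t) := Real.exp_pos _
      have hexp : Real.exp (-((m:ℝ) + 2) * t) * Real.exp (c * t) = 1 := by
        rw [← Real.exp_add, hc]; ring_nf; exact Real.exp_zero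
      have key : Real.exp (-((m:ℝ) + 2) * t) * (1 + ∫ s in (0:ℝ)..t, Real.exp (c * s) * phi d m s)
          ≤ Real.exp (-((m:ℝ) + 2) * t) * (1 + (K / c * Real.exp (c * t) - K / c)) :=
        mul_le_mul_of_nonneg_left (by linarith) he0.le
      have expand : Real.exp (-((m:ℝ) + 2) * t) * (1 + (K / c * Real.exp (c * t) - K / c))
          = Real.exp (-((m:ℝ) + 2) * t) * (1 - K / c) + K / c := by
        linear_combination (K / c) * hexp
      have hKc : 0 ≤ K / c := by positivity
      nlinarith [key, expand, he1, he0]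

lemma r_nonneg (d : ℕ) (hd : 4 ≤ d) :
    ∀ m : ℕ, ∀ t : ℝ, 0 ≤ t → 0 ≤ v d (m + 1) t - v d m t := by
  have hD : (3:ℝ) ≤ (d:ℝ) - 1 := by
    have : (4:ℝ) ≤ (d:ℝ) := by exact_mod_cast hd
    linarith
  have hD0 : ((d:ℝ) - 1) ≠ 0 := by linarith
  intro m
  induction m using Nat.strong_induction_on with
  | _ m ih =>
    match m with
    | 0 =>
      intro t _
      rw [v_zero]
      simpa using (show 0 ≤ v d 1 t from Real.exp_nonneg _)
    | 1 =>
      apply nonneg_of_ode (c := 2) (g := fun t => (3 * (d:ℝ) - 6) / ((d:ℝ) - 1) * v d 1 t)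
      · intro t
        have h2 := v_hasDeriv d 0 t
        have h1 := v1_hasDeriv d t
        have := h2.sub h1
        convert this using 1
        · rfl
        · rfl
        · rfl
        unfold phi
        rw [v_zero]
        push_cast
        field_simp
        ring
      · intro t ht
        apply mul_nonneg
        · apply div_nonneg _ (by linarith)
          have : (4:ℝ) ≤ (d:ℝ) := by exact_mod_cast hd
          linarith
        · exact v_nonneg d hd 1 t ht
      · rw [v_at_zero, v1_at_zero]; norm_num
    | (k + 2) =>
      apply nonneg_of_ode (c := (k : ℝ) + 3)
        (g := fun t => ((k:ℝ)+2)^2/((d:ℝ)-1) * (v d (k+1) t - v d k t) +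
          (((k:ℝ)+3)^2*((d:ℝ)-2)/((d:ℝ)-1) - 1) * (v d (k+2) t - v d (k+1) t) +
          (2*(k:ℝ)+4) * v d (k+1) t)
      · intro t
        have h2 := v_hasDeriv d (k + 1) t
        have h1 := v_hasDeriv d k t
        have := h2.sub h1
        convert this using 1
        · rfl
        · rfl
        · rfl
        unfold phi
        push_cast
        field_simp
        ring
      · intro t ht
        have r1 := ih k (by omega) t ht
        have r2 := ih (k + 1) (by omega) t ht
        have hv1 := v_nonneg d hd (k + 1) t ht
        have c1 : (0:ℝ) ≤ ((k:ℝ)+2)^2/((d:ℝ)-1) := by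
          apply div_nonneg (by positivity); linarith
        have c2 : (0:ℝ) ≤ ((k:ℝ)+3)^2*((d:ℝ)-2)/((d:ℝ)-1) - 1 := by
          rw [sub_nonneg, le_div_iff₀ (by linarith)]
          have hk : (0:ℝ) ≤ (k:ℝ) := Nat.cast_nonneg k
          nlinarith
        have c3 : (0:ℝ) ≤ 2*(k:ℝ)+4 := by positivity
        have := mul_nonneg c1 r1
        have := mul_nonneg c2 r2
        have := mul_nonneg c3 hv1
        linarith
      · rw [show k + 2 + 1 = (k + 1) + 2 from rfl, v_at_zero, v_at_zero]
        norm_num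



lemma integrable_pow_exp (k : ℕ) {b : ℝ} (hb : 0 < b) :
    IntegrableOn (fun t => t ^ k * Real.exp (-b * t)) (Set.Ioi (0:ℝ)) := by
  apply integrable_of_isBigO_exp_neg (half_pos hb) (by fun_prop)
  rw [Asymptotics.isBigO_iff]
  refine ⟨(2 / b) ^ k, ?_⟩
  have h1 : Tendsto (fun x : ℝ => ((b / 2) * x) ^ k * Real.exp (-((b / 2) * x)))
      atTop (nhds 0) := by
    have := (Real.tendsto_pow_mul_exp_neg_atTop_nhds_zero k).comp
      (Filter.Tendsto.const_mul_atTop (half_pos hb) tendsto_id)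
    simpa [Function.comp_def] using this
  have h2 : ∀ᶠ x : ℝ in atTop, ((b / 2) * x) ^ k * Real.exp (-((b / 2) * x)) < 1 :=
    h1.eventually_lt_const one_pos
  filter_upwards [h2, eventually_ge_atTop (0:ℝ)] with x hx hx0
  have hxk : |x| = x := abs_of_nonneg hx0
  have key : x ^ k * Real.exp (-(b/2) * x) ≤ (2 / b) ^ k := by
    have hpow : ((b / 2) * x) ^ k = (b/2)^k * x^k := by rw [mul_pow]
    have hb2 : (0:ℝ) < (b/2)^k := by positivity
    rw [hpow] at hx
    have : (b/2)^k * (x ^ k * Real.exp (-(b/2) * x)) < 1 := by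
      rw [show -(b/2) * x = -((b/2)*x) by ring]; nlinarith [Real.exp_pos (-((b/2)*x))]
    have h3 : x ^ k * Real.exp (-(b/2) * x) ≤ 1 / (b/2)^k := by
      rw [le_div_iff₀ hb2]; nlinarith
    calc x ^ k * Real.exp (-(b/2) * x) ≤ 1 / (b/2)^k := h3
      _ = (2/b)^k := by rw [div_pow, div_pow, one_div_div]
  have hsplit : Real.exp (-b * x) = Real.exp (-(b/2) * x) * Real.exp (-(b/2) * x) := by
    rw [← Real.exp_add]; ring_nf
  rw [Real.norm_eq_abs, Real.norm_eq_abs, abs_of_nonneg (by positivity : (0:ℝ) ≤ x ^ k * Real.exp (-b * x)),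
    abs_of_nonneg (Real.exp_pos _).le, hsplit]
  calc x ^ k * (Real.exp (-(b/2) * x) * Real.exp (-(b/2) * x))
      = (x ^ k * Real.exp (-(b/2) * x)) * Real.exp (-(b/2) * x) := by ring
    _ ≤ (2/b)^k * Real.exp (-(b/2) * x) := by
        apply mul_le_mul_of_nonneg_right key (Real.exp_pos _).le

section Laplace
variable {f : ℝ → ℝ} {C : ℝ}

/-- integrand integrability -/
lemma lap_integrableOn (hf : Continuous f) (h0 : ∀ t, 0 ≤ t → 0 ≤ f t)
    (hC : ∀ t, 0 ≤ t → f t ≤ C) (k : ℕ) {α : ℝ} (hα : 0 < α) :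
    IntegrableOn (fun t => (-t) ^ k * Real.exp (-α * t) * f t) (Set.Ioi (0:ℝ)) := by
  have hint := (integrable_pow_exp k hα).const_mul C
  apply Integrable.mono hint ((by fun_prop : Continuous fun t =>
    (-t) ^ k * Real.exp (-α * t) * f t).aestronglyMeasurable)
  rw [ae_restrict_iff' measurableSet_Ioi]
  apply ae_of_all
  intro t ht
  have ht0 : (0:ℝ) ≤ t := le_of_lt ht
  have hft := h0 t ht0
  have hfC := hC t ht0
  have hCnn : 0 ≤ C := le_trans hft hfC
  rw [Real.norm_eq_abs, Real.norm_eq_abs, abs_mul, abs_mul, abs_pow, abs_neg,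
    abs_of_nonneg ht0, abs_of_nonneg (Real.exp_pos _).le, abs_of_nonneg hft,
    abs_of_nonneg (by positivity : (0:ℝ) ≤ C * (t ^ k * Real.exp (-α * t)))]
  calc t ^ k * Real.exp (-α * t) * f t ≤ t ^ k * Real.exp (-α * t) * C := by
        apply mul_le_mul_of_nonneg_left hfC (by positivity)
    _ = C * (t ^ k * Real.exp (-α * t)) := by ring

lemma lap_hasDerivAt (hf : Continuous f) (h0 : ∀ t, 0 ≤ t → 0 ≤ f t)
    (hC : ∀ t, 0 ≤ t → f t ≤ C) (k : ℕ) {α : ℝ} (hα : 0 < α) :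
    HasDerivAt (fun x => ∫ t in Set.Ioi (0:ℝ), (-t) ^ k * Real.exp (-x * t) * f t)
      (∫ t in Set.Ioi (0:ℝ), (-t) ^ (k+1) * Real.exp (-α * t) * f t) α := by
  have hCnn : 0 ≤ C := le_trans (h0 0 le_rfl) (hC 0 le_rfl)
  have key := hasDerivAt_integral_of_dominated_loc_of_deriv_le (μ := volume.restrict (Set.Ioi (0:ℝ)))
    (F := fun x t => (-t) ^ k * Real.exp (-x * t) * f t)
    (F' := fun x t => (-t) ^ (k+1) * Real.exp (-x * t) * f t)
    (x₀ := α) (s := Metric.ball α (α/2)) (bound := fun t => C * (t ^ (k+1) * Real.exp (-(α/2) * t)))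
    (Metric.ball_mem_nhds α (half_pos hα))
    (Filter.Eventually.of_forall fun x => (by fun_prop : Continuous fun t : ℝ =>
      (-t) ^ k * Real.exp (-x * t) * f t).aestronglyMeasurable)
    (lap_integrableOn hf h0 hC k hα)
    ((by fun_prop : Continuous fun t : ℝ =>
      (-t) ^ (k+1) * Real.exp (-α * t) * f t).aestronglyMeasurable)
    ?_ ?_ ?_
  · exact key.2
  · -- bound
    rw [ae_restrict_iff' measurableSet_Ioi]
    apply ae_of_all
    intro t ht x hx
    have ht0 : (0:ℝ) ≤ t := le_of_lt ht
    have hx2 : α / 2 ≤ x := by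
      have := abs_lt.mp (mem_ball_iff_norm.mp hx)
      linarith [this.1]
    have hexp : Real.exp (-x * t) ≤ Real.exp (-(α/2) * t) := by
      apply Real.exp_le_exp.mpr
      nlinarith
    rw [Real.norm_eq_abs, abs_mul, abs_mul, abs_pow, abs_neg, abs_of_nonneg ht0,
      abs_of_nonneg (Real.exp_pos _).le, abs_of_nonneg (h0 t ht0)]
    calc t ^ (k+1) * Real.exp (-x * t) * f t
        ≤ t ^ (k+1) * Real.exp (-(α/2) * t) * C := by
          apply mul_le_mul (by apply mul_le_mul_of_nonneg_left hexp (by positivity))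
            (hC t ht0) (h0 t ht0) (by positivity)
      _ = C * (t ^ (k+1) * Real.exp (-(α/2) * t)) := by ring
  · exact (integrable_pow_exp (k+1) (half_pos hα)).const_mul C
  · -- differentiability
    apply ae_of_all
    intro t x _
    have hE : HasDerivAt (fun x : ℝ => Real.exp (-x * t)) (-t * Real.exp (-x * t)) x := by
      have h := ((hasDerivAt_id x).const_mul (-t)).exp
      simp only [id] at h
      have heq : (fun x : ℝ => Real.exp (-t * x)) = fun x : ℝ => Real.exp (-x * t) := by
        funext y; ring_nf
      rw [heq] at h
      convert h using 1
      ring_nf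
    have := (hE.const_mul ((-t) ^ k)).mul_const (f t)
    convert this using 1
    · rfl
    ring


lemma lap_complex_diff (hf : Continuous f) (h0 : ∀ t, 0 ≤ t → 0 ≤ f t)
    (hC : ∀ t, 0 ≤ t → f t ≤ C) :
    DifferentiableOn ℂ (fun z : ℂ => ∫ t in Set.Ioi (0:ℝ), Complex.exp (-z * t) * f t)
      {z : ℂ | 0 < z.re} := by
  have hCnn : 0 ≤ C := le_trans (h0 0 le_rfl) (hC 0 le_rfl)
  intro z₀ hz₀
  have hz : 0 < z₀.re := hz₀
  have hcont : ∀ x : ℂ, Continuous fun t : ℝ => Complex.exp (-x * t) * (f t : ℂ) := by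
    intro x; fun_prop
  have hcont' : ∀ x : ℂ, Continuous fun t : ℝ => (-t : ℂ) * Complex.exp (-x * t) * (f t : ℂ) := by
    intro x; fun_prop
  have hnorm : ∀ (x : ℂ) (t : ℝ), ‖Complex.exp (-x * t)‖ = Real.exp (-x.re * t) := by
    intro x t
    rw [Complex.norm_exp]
    congr 1
    simp [Complex.mul_re]
  have key := hasDerivAt_integral_of_dominated_loc_of_deriv_le
    (μ := volume.restrict (Set.Ioi (0:ℝ)))
    (F := fun (x : ℂ) (t : ℝ) => Complex.exp (-x * t) * (f t : ℂ))
    (F' := fun (x : ℂ) (t : ℝ) => (-t : ℂ) * Complex.exp (-x * t) * (f t : ℂ))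
    (x₀ := z₀) (s := Metric.ball z₀ (z₀.re / 2))
    (bound := fun t : ℝ => C * (t ^ 1 * Real.exp (-(z₀.re / 2) * t)))
    (Metric.ball_mem_nhds z₀ (half_pos hz))
    (Filter.Eventually.of_forall fun x => (hcont x).aestronglyMeasurable)
    ?_ ((hcont' z₀).aestronglyMeasurable) ?_ ?_ ?_
  · exact (key.2.differentiableAt).differentiableWithinAt
  · -- integrability of F z₀
    apply Integrable.mono ((exp_neg_integrableOn_Ioi 0 hz).const_mul C)
      (hcont z₀).aestronglyMeasurable
    rw [ae_restrict_iff' measurableSet_Ioi]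
    apply ae_of_all
    intro t ht
    have ht0 : (0:ℝ) ≤ t := le_of_lt ht
    rw [norm_mul, hnorm, Complex.norm_real, Real.norm_eq_abs, abs_of_nonneg (h0 t ht0),
      Real.norm_eq_abs, abs_of_nonneg (by positivity : (0:ℝ) ≤ C * Real.exp (-z₀.re * t))]
    calc Real.exp (-z₀.re * t) * f t ≤ Real.exp (-z₀.re * t) * C :=
          mul_le_mul_of_nonneg_left (hC t ht0) (Real.exp_pos _).le
      _ = C * Real.exp (-z₀.re * t) := by ring
  · -- bound on F'
    rw [ae_restrict_iff' measurableSet_Ioi]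
    apply ae_of_all
    intro t ht x hx
    have ht0 : (0:ℝ) ≤ t := le_of_lt ht
    have hxre : z₀.re / 2 ≤ x.re := by
      have h1 : ‖x - z₀‖ < z₀.re / 2 := mem_ball_iff_norm.mp hx
      have h2 : |(x - z₀).re| ≤ ‖x - z₀‖ := Complex.abs_re_le_norm _
      rw [Complex.sub_re] at h2
      have := abs_le.mp (le_of_lt (lt_of_le_of_lt h2 h1))
      linarith [this.1]
    rw [norm_mul, norm_mul, hnorm, norm_neg, Complex.norm_real, Complex.norm_real,
      Real.norm_eq_abs, Real.norm_eq_abs, abs_of_nonneg ht0, abs_of_nonneg (h0 t ht0)]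
    have hexp : Real.exp (-x.re * t) ≤ Real.exp (-(z₀.re / 2) * t) := by
      apply Real.exp_le_exp.mpr
      nlinarith
    calc t * Real.exp (-x.re * t) * f t ≤ t * Real.exp (-(z₀.re / 2) * t) * C := by
          apply mul_le_mul (mul_le_mul_of_nonneg_left hexp ht0) (hC t ht0) (h0 t ht0)
            (by positivity)
      _ = C * (t ^ 1 * Real.exp (-(z₀.re / 2) * t)) := by ring
  · exact (integrable_pow_exp 1 (half_pos hz)).const_mul C
  · apply ae_of_all
    intro t x _
    have hE : HasDerivAt (fun x : ℂ => Complex.exp (-x * t))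
        ((-t : ℂ) * Complex.exp (-x * t)) x := by
      have h := ((hasDerivAt_id x).const_mul (-(t:ℂ))).cexp
      simp only [id] at h
      have heq : (fun x : ℂ => Complex.exp (-(t:ℂ) * x)) = fun x : ℂ => Complex.exp (-x * t) := by
        funext y; ring_nf
      rw [heq] at h
      convert h using 1
      · rfl
      ring_nf
    have := hE.mul_const ((f t : ℂ))
    convert this using 1

lemma laplace_CM (hf : Continuous f) (h0 : ∀ t, 0 ≤ t → 0 ≤ f t)
    (hC : ∀ t, 0 ≤ t → f t ≤ C) :
    ContDiffOn ℝ (⊤ : ℕ∞) (fun α => ∫ t in Set.Ioi (0:ℝ), Real.exp (-α * t) * f t) (Set.Ioi 0) ∧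
    ∀ k : ℕ, ∀ α : ℝ, 0 < α →
      0 ≤ (-1 : ℝ) ^ k * iteratedDerivWithin k
        (fun α => ∫ t in Set.Ioi (0:ℝ), Real.exp (-α * t) * f t) (Set.Ioi 0) α := by
  set L : ℕ → ℝ → ℝ := fun k x => ∫ t in Set.Ioi (0:ℝ), (-t) ^ k * Real.exp (-x * t) * f t
    with hL
  have hL0 : (fun α => ∫ t in Set.Ioi (0:ℝ), Real.exp (-α * t) * f t) = L 0 := by
    funext x; simp [hL]
  have huniq : UniqueDiffOn ℝ (Set.Ioi (0:ℝ)) := isOpen_Ioi.uniqueDiffOn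
  have hDeriv : ∀ k, ∀ α : ℝ, 0 < α → HasDerivAt (L k) (L (k+1) α) α := fun k α hα =>
    lap_hasDerivAt hf h0 hC k hα
  -- derivWithin of L k equals L (k+1) on Ioi 0
  have hDW : ∀ k, ∀ α : ℝ, 0 < α → derivWithin (L k) (Set.Ioi 0) α = L (k+1) α := by
    intro k α hα
    exact ((hDeriv k α hα).hasDerivWithinAt).derivWithin (huniq α hα)
  -- iterated derivatives
  have hIter : ∀ k, ∀ α : ℝ, 0 < α →
      iteratedDerivWithin k (L 0) (Set.Ioi 0) α = L k α := by
    intro k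
    induction k with
    | zero => intro α _; simp
    | succ k ih =>
      intro α hα
      rw [iteratedDerivWithin_succ]
      have : derivWithin (iteratedDerivWithin k (L 0) (Set.Ioi 0)) (Set.Ioi 0) α
          = derivWithin (L k) (Set.Ioi 0) α := by
        apply derivWithin_congr
        · exact fun x hx => ih x hx
        · exact ih α hα
      rw [this, hDW k α hα]
  constructor
  · rw [hL0]
    have hS : IsOpen {z : ℂ | 0 < z.re} := isOpen_lt continuous_const Complex.continuous_re
    have h1 : AnalyticOnNhd ℂ (fun z : ℂ => ∫ t in Set.Ioi (0:ℝ), Complex.exp (-z * t) * f t)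
        {z : ℂ | 0 < z.re} := (lap_complex_diff hf h0 hC).analyticOnNhd hS
    have h2 := h1.restrictScalars (𝕜 := ℝ)
    have h3 : AnalyticOnNhd ℝ ((fun z : ℂ => ∫ t in Set.Ioi (0:ℝ), Complex.exp (-z * t) * f t) ∘
        (fun x : ℝ => (x : ℂ))) (Set.Ioi 0) := by
      apply h2.comp (Complex.ofRealCLM.analyticOnNhd _)
      intro x hx
      simpa using hx
    have h4 : AnalyticOnNhd ℝ (Complex.reCLM ∘ ((fun z : ℂ =>
        ∫ t in Set.Ioi (0:ℝ), Complex.exp (-z * t) * f t) ∘ (fun x : ℝ => (x : ℂ))))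
        (Set.Ioi 0) :=
      (Complex.reCLM.analyticOnNhd Set.univ).comp h3 (Set.mapsTo_univ _ _)
    have heq : Set.EqOn (Complex.reCLM ∘ ((fun z : ℂ =>
        ∫ t in Set.Ioi (0:ℝ), Complex.exp (-z * t) * f t) ∘ (fun x : ℝ => (x : ℂ)))) (L 0)
        (Set.Ioi 0) := by
      intro x _
      have hcast : (fun t : ℝ => Complex.exp (-(x:ℂ) * t) * (f t : ℂ))
          = fun t : ℝ => ((Real.exp (-x * t) * f t : ℝ) : ℂ) := by
        funext t
        push_cast [← Complex.ofReal_exp]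
        norm_num
      have hint : (∫ (t : ℝ) in Set.Ioi (0:ℝ), Complex.exp (-(x:ℂ) * ↑t) * ↑(f t))
          = ((∫ t in Set.Ioi (0:ℝ), Real.exp (-x * t) * f t : ℝ) : ℂ) := by
        rw [hcast]; exact integral_ofReal
      simp only [Function.comp_apply, hint, Complex.reCLM_apply, Complex.ofReal_re, hL]
      simp
    exact (h4.congr isOpen_Ioi heq).contDiffOn isOpen_Ioi.uniqueDiffOn
  · intro k α hα
    rw [hL0, hIter k α hα]
    have : (-1:ℝ) ^ k * L k α = ∫ t in Set.Ioi (0:ℝ), t ^ k * Real.exp (-α * t) * f t := by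
      rw [hL, ← integral_const_mul]
      apply setIntegral_congr_fun measurableSet_Ioi
      intro t _
      have : ((-1:ℝ)) ^ k * (-t) ^ k = t ^ k := by
        rw [← mul_pow]; ring_nf
      calc (-1:ℝ) ^ k * ((-t) ^ k * Real.exp (-α * t) * f t)
          = ((-1:ℝ) ^ k * (-t) ^ k) * Real.exp (-α * t) * f t := by ring
        _ = t ^ k * Real.exp (-α * t) * f t := by rw [this]
    rw [this]
    apply setIntegral_nonneg measurableSet_Ioi
    intro t ht
    have ht0 : (0:ℝ) ≤ t := le_of_lt ht
    have := h0 t ht0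
    positivity


theorem Rfun_completely_monotone (d : ℕ) (hd : 4 ≤ d) (m : ℕ) (hm : 1 ≤ m) :
    ContDiffOn ℝ (⊤ : ℕ∞) (Rfun d m) (Set.Ioi 0) ∧
    ∀ k : ℕ, ∀ α : ℝ, 0 < α →
      0 ≤ (-1 : ℝ) ^ k * iteratedDerivWithin k (Rfun d m) (Set.Ioi 0) α := by
  obtain ⟨k, rfl⟩ : ∃ k, m = k + 1 := ⟨m - 1, by omega⟩
  have hf : Continuous fun t => v d (k+1) t - v d k t := (v_cont d (k+1)).sub (v_cont d k)
  obtain ⟨C1, _, hB1⟩ := v_bounded d hd (k+1)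
  have h0 : ∀ t, 0 ≤ t → 0 ≤ v d (k+1) t - v d k t := r_nonneg d hd k
  have hC : ∀ t, 0 ≤ t → v d (k+1) t - v d k t ≤ C1 := fun t ht => by
    have h1 := v_nonneg d hd k t ht
    have h2 := hB1 t ht
    linarith
  have key := laplace_CM hf h0 hC
  have hR : Rfun d (k+1) = fun α =>
      ∫ t in Set.Ioi (0:ℝ), Real.exp (-α * t) * (v d (k+1) t - v d k t) := rfl
  rw [hR]
  exact key
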